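/- Let d ∈ ℕ, U = [0,1]^d, β ≥ 1 and c > 0. Let θ ∈ ℝ^d with θ ≠ 0, b ∈ ℝ, and M ≠ 0. Then the function f : U → ℝ, f(x) = M cos(θ·x + b), satisfies ‖f‖_{B^{β,c}(U)} = ∞; that is, there exists no g ∈ L¹(ℝ^d) with g|_U = f and ∫_{ℝ^d} e^{c|ξ|^β} |𝓕g(ξ)| dξ < ∞. In particular, for β ≥ 1 the cosine-network classes Σ_{N,M} are not contained in B^{β,c}(U) for any N ∈ ℕ and M > 0. -/

import Mathlib

open MeasureTheory Real
open scoped InnerProductSpace ENNReal NNReal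

noncomputable section

/-- Fourier transform with the convention 𝓕g(ξ) = (2π)^{−d/2} ∫ g(x) e^{−i x·ξ} dx. -/
def fourierT {d : ℕ} (g : EuclideanSpace ℝ (Fin d) → ℂ) (ξ : EuclideanSpace ℝ (Fin d)) : ℂ :=
  (((2 * Real.pi) ^ (-(d : ℝ) / 2) : ℝ) : ℂ) *
    ∫ x : EuclideanSpace ℝ (Fin d), g x * Complex.exp (-(Complex.I * (⟪x, ξ⟫_ℝ : ℂ)))

/-- The exponential spectral Barron norm of `f : U → ℝ` (as a function on ℝ^d whose values
outside `U` are irrelevant), with values in `ℝ≥0∞`; the infimum of the empty set is `⊤`. -/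
def expBarronNorm {d : ℕ} (β c : ℝ) (U : Set (EuclideanSpace ℝ (Fin d)))
    (f : EuclideanSpace ℝ (Fin d) → ℝ) : ℝ≥0∞ :=
  sInf {y : ℝ≥0∞ | ∃ fe : EuclideanSpace ℝ (Fin d) → ℝ, Integrable fe ∧ Set.EqOn fe f U ∧
    y = ∫⁻ ξ, ENNReal.ofReal
      (Real.exp (c * ‖ξ‖ ^ β) * ‖fourierT (fun x => (fe x : ℂ)) ξ‖)}

/-- Iterated partial derivatives along a list of coordinate directions. -/
def pderivSeq {d : ℕ} {F : Type*} [NormedAddCommGroup F] [NormedSpace ℝ F] :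
    List (Fin d) → (EuclideanSpace ℝ (Fin d) → F) → EuclideanSpace ℝ (Fin d) → F
  | [], g => g
  | i :: is, g => pderivSeq is fun x => fderiv ℝ g x (EuclideanSpace.single i 1)

/-- The partial derivative ∂^α for a multi-index α ∈ ℕ^d. -/
def pderivMulti {d : ℕ} {F : Type*} [NormedAddCommGroup F] [NormedSpace ℝ F]
    (α : Fin d → ℕ) (g : EuclideanSpace ℝ (Fin d) → F) : EuclideanSpace ℝ (Fin d) → F :=
  pderivSeq ((List.finRange d).flatMap fun i => List.replicate (α i) i) g

/-- The Sobolev norm ‖g‖_{H^ℓ(U)} = (Σ_{|α| ≤ ℓ} ∫_U |∂^α g|²)^{1/2}. -/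
def sobolevOn {d : ℕ} (ℓ : ℕ) (U : Set (EuclideanSpace ℝ (Fin d)))
    (g : EuclideanSpace ℝ (Fin d) → ℂ) : ℝ :=
  Real.sqrt (∑ α : Fin d → Fin (ℓ + 1),
    if (∑ i, (α i : ℕ)) ≤ ℓ then
      ∫ x in U, ‖pderivMulti (fun i => (α i : ℕ)) g x‖ ^ 2
    else 0)

/-- The class Σ_{N,M} of shallow cosine (complex exponential) networks. -/
def cosineClass (d N : ℕ) (M : ℝ) : Set (EuclideanSpace ℝ (Fin d) → ℂ) :=
  {g | ∃ (a : Fin N → ℂ) (θ : Fin N → EuclideanSpace ℝ (Fin d)),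
    (∑ n, ‖a n‖) ≤ M ∧
    g = fun x => ∑ n, a n * Complex.exp (Complex.I * ((2 * Real.pi * ⟪θ n, x⟫_ℝ : ℝ) : ℂ))}

/-- The unit cube [0,1]^d. -/
def unitCube (d : ℕ) : Set (EuclideanSpace ℝ (Fin d)) :=
  {x | ∀ i, x i ∈ Set.Icc (0 : ℝ) 1}


/-- The exponential spectral Barron norm for complex-valued functions. -/
def expBarronNormC {d : ℕ} (β c : ℝ) (U : Set (EuclideanSpace ℝ (Fin d)))
    (f : EuclideanSpace ℝ (Fin d) → ℂ) : ℝ≥0∞ :=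
  sInf {y : ℝ≥0∞ | ∃ fe : EuclideanSpace ℝ (Fin d) → ℂ, Integrable fe ∧ Set.EqOn fe f U ∧
    y = ∫⁻ ξ, ENNReal.ofReal (Real.exp (c * ‖ξ‖ ^ β) * ‖fourierT fe ξ‖)}

open scoped FourierTransform RealInnerProductSpace
open Filter

namespace Stmt8Aux

variable {d : ℕ}

local notation "E" => EuclideanSpace ℝ (Fin d)

lemma coord_le_norm (x : E) (i : Fin d) : |x i| ≤ ‖x‖ := by
  have h1 : ⟪EuclideanSpace.single i (1:ℝ), x⟫_ℝ = x i := by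
    simp [EuclideanSpace.inner_single_left]
  calc |x i| = |⟪EuclideanSpace.single i (1:ℝ), x⟫_ℝ| := by rw [h1]
    _ ≤ ‖EuclideanSpace.single i (1:ℝ)‖ * ‖x‖ := abs_real_inner_le_norm _ _
    _ = ‖x‖ := by simp [EuclideanSpace.norm_single]

/-- The open unit cube. -/
def S (d : ℕ) : Set (EuclideanSpace ℝ (Fin d)) := {x | ∀ i, x i ∈ Set.Ioo (0:ℝ) 1}

lemma S_open : IsOpen (S d) := by
  have h : S d = ⋂ i, (fun x : E => x i) ⁻¹' Set.Ioo (0:ℝ) 1 := by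
    ext x; simp [S]
  rw [h]
  exact isOpen_iInter_of_finite fun i =>
    isOpen_Ioo.preimage (EuclideanSpace.proj i).continuous

lemma S_subset : S d ⊆ unitCube d := fun x hx i => Set.Ioo_subset_Icc_self (hx i)

set_option maxHeartbeats 2000000 in
lemma key (c : ℝ) (hc : 0 < c) (θ : E) (hθ : θ ≠ 0)
    (A B : ℂ) (hAB : ¬(A = 0 ∧ B = 0)) (fe : E → ℂ)
    (hint : Integrable fe)
    (heq : ∀ x ∈ unitCube d, fe x
      = A * Complex.exp (Complex.I * (⟪θ, x⟫_ℝ : ℂ))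
        + B * Complex.exp (-(Complex.I * (⟪θ, x⟫_ℝ : ℂ))))
    (hfin : (∫⁻ ξ, ENNReal.ofReal (Real.exp (c * ‖ξ‖) * ‖fourierT fe ξ‖)) ≠ ⊤) : False := by
  classical
  set φ : E → ℂ := 𝓕 fe with hφdef
  have hφcont : Continuous φ :=
    VectorFourier.fourierIntegral_continuous Real.continuous_fourierChar
      (continuous_inner : Continuous fun p : E × E => ⟪p.1, p.2⟫_ℝ) hint
  have h2π : (0:ℝ) < 2 * Real.pi := by positivity
  -- Step 2: fourierT in terms of 𝓕
  have hrel : ∀ ξ : E, fourierT fe ξ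
      = (((2 * Real.pi) ^ (-(d : ℝ) / 2) : ℝ) : ℂ) * φ ((2 * Real.pi)⁻¹ • ξ) := by
    intro ξ
    rw [hφdef, Real.fourier_eq']
    unfold fourierT
    congr 1
    refine integral_congr_ae (Filter.Eventually.of_forall fun v => ?_)
    have hir : ⟪v, (2 * Real.pi)⁻¹ • ξ⟫_ℝ = (2 * Real.pi)⁻¹ * ⟪v, ξ⟫_ℝ :=
      real_inner_smul_right _ _ _
    simp only [smul_eq_mul, hir]
    have h1 : (-2 * Real.pi * ((2 * Real.pi)⁻¹ * ⟪v, ξ⟫_ℝ)) = -⟪v, ξ⟫_ℝ := by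
      field_simp
    rw [h1]
    rw [show ((-⟪v, ξ⟫_ℝ : ℝ) : ℂ) * Complex.I = -(Complex.I * ((⟪v, ξ⟫_ℝ : ℝ) : ℂ)) by
      push_cast; ring]
    ring
  -- Step 3: exponential moment of φ
  have hA₀ : Integrable (fun w : E => Real.exp (2 * Real.pi * c * ‖w‖) * ‖φ w‖) := by
    have hcontH : Continuous fun w : E => Real.exp (2 * Real.pi * c * ‖w‖) * ‖φ w‖ :=
      (Real.continuous_exp.comp (continuous_const.mul continuous_norm)).mul hφcont.norm
    set H : E → ℝ≥0∞ := fun w =>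
      ENNReal.ofReal (Real.exp (2 * Real.pi * c * ‖w‖) * ‖φ w‖) with hHdef
    have hHmeas : Measurable H := ENNReal.measurable_ofReal.comp hcontH.measurable
    have hptwise : ∀ ξ : E,
        ENNReal.ofReal (Real.exp (c * ‖ξ‖) * ‖fourierT fe ξ‖)
        = ENNReal.ofReal ((2 * Real.pi) ^ (-(d : ℝ) / 2)) * H ((2 * Real.pi)⁻¹ • ξ) := by
      intro ξ
      have hK : (0:ℝ) < (2 * Real.pi) ^ (-(d : ℝ) / 2) := Real.rpow_pos_of_pos h2π _
      have hnn : ‖(2 * Real.pi)⁻¹ • ξ‖ = (2 * Real.pi)⁻¹ * ‖ξ‖ := by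
        rw [norm_smul, Real.norm_eq_abs, abs_of_pos (inv_pos.2 h2π)]
      have hnormT : ‖fourierT fe ξ‖
          = (2 * Real.pi) ^ (-(d : ℝ) / 2) * ‖φ ((2 * Real.pi)⁻¹ • ξ)‖ := by
        rw [hrel ξ, norm_mul, Complex.norm_real, Real.norm_eq_abs, abs_of_pos hK]
      have hHval : H ((2 * Real.pi)⁻¹ • ξ)
          = ENNReal.ofReal (Real.exp (c * ‖ξ‖) * ‖φ ((2 * Real.pi)⁻¹ • ξ)‖) := by
        rw [hHdef]
        show ENNReal.ofReal (Real.exp (2 * Real.pi * c * ‖(2 * Real.pi)⁻¹ • ξ‖)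
          * ‖φ ((2 * Real.pi)⁻¹ • ξ)‖) = _
        rw [hnn]
        congr 2
        field_simp
      rw [hnormT, hHval, ← ENNReal.ofReal_mul hK.le]
      congr 1
      ring
    have hfin2 : (∫⁻ ξ : E, H ((2 * Real.pi)⁻¹ • ξ)) ≠ ⊤ := by
      have heqint : (∫⁻ ξ, ENNReal.ofReal (Real.exp (c * ‖ξ‖) * ‖fourierT fe ξ‖))
          = ENNReal.ofReal ((2 * Real.pi) ^ (-(d : ℝ) / 2))
            * ∫⁻ ξ : E, H ((2 * Real.pi)⁻¹ • ξ) := by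
        rw [← MeasureTheory.lintegral_const_mul' _ _ ENNReal.ofReal_ne_top]
        exact lintegral_congr fun ξ => hptwise ξ
      intro htop
      rw [heqint, htop, ENNReal.mul_top] at hfin
      · exact hfin rfl
      · simp only [ne_eq, ENNReal.ofReal_eq_zero, not_le]
        exact Real.rpow_pos_of_pos h2π _
    have hconst : (∫⁻ ξ : E, H ((2 * Real.pi)⁻¹ • ξ))
        = ENNReal.ofReal |((2 * Real.pi)⁻¹ ^ Module.finrank ℝ (EuclideanSpace ℝ (Fin d)))|⁻¹
          * ∫⁻ w, H w := by
      rw [← MeasureTheory.lintegral_map hHmeas (measurable_const_smul _)]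
      rw [MeasureTheory.Measure.map_addHaar_smul volume (inv_ne_zero h2π.ne')]
      simp [MeasureTheory.lintegral_smul_measure, abs_inv, abs_pow]
    have hHfin : (∫⁻ w, H w) ≠ ⊤ := by
      intro htop
      have habs : (0:ℝ) < |((2 * Real.pi)⁻¹ ^ Module.finrank ℝ (EuclideanSpace ℝ (Fin d)))|⁻¹ := by
        apply inv_pos.2
        apply abs_pos.2
        positivity
      rw [hconst, htop, ENNReal.mul_top (ENNReal.ofReal_pos.2 habs).ne'] at hfin2
      exact hfin2 rfl
    refine ⟨hcontH.aestronglyMeasurable, ?_⟩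
    rw [MeasureTheory.hasFiniteIntegral_iff_ofReal ?hpos]
    · exact lt_top_iff_ne_top.2 hHfin
    case hpos =>
      filter_upwards with w
      positivity
  have hφint : Integrable φ := by
    refine hA₀.mono hφcont.aestronglyMeasurable (Filter.Eventually.of_forall fun w => ?_)
    have h1 : (1:ℝ) ≤ Real.exp (2 * Real.pi * c * ‖w‖) := by
      rw [← Real.exp_zero]
      apply Real.exp_le_exp.2; positivity
    have h2 : ‖φ w‖ ≤ Real.exp (2 * Real.pi * c * ‖w‖) * ‖φ w‖ := by
      nlinarith [norm_nonneg (φ w)]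
    have h3 : (0:ℝ) ≤ Real.exp (2 * Real.pi * c * ‖w‖) * ‖φ w‖ := by positivity
    rw [Real.norm_eq_abs, abs_of_nonneg h3]
    exact h2
  -- the target function
  set f : E → ℂ := fun x => A * Complex.exp (Complex.I * (⟪θ, x⟫_ℝ : ℂ))
        + B * Complex.exp (-(Complex.I * (⟪θ, x⟫_ℝ : ℂ))) with hfdef
  have hfcont : Continuous f := by
    apply Continuous.add
    · exact continuous_const.mul (Complex.continuous_exp.comp
        (continuous_const.mul (Complex.continuous_ofReal.comp
          (innerSL ℝ θ).continuous)))
    · exact continuous_const.mul (Complex.continuous_exp.comp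
        ((continuous_const.mul (Complex.continuous_ofReal.comp
          (innerSL ℝ θ).continuous)).neg))
  -- Step 4: inversion on the open cube
  have hinv : ∀ v ∈ S d, 𝓕⁻ φ v = f v := by
    intro v hv
    have hmem : S d ∈ nhds v := S_open.mem_nhds hv
    have heqv : f =ᶠ[nhds v] fe := by
      filter_upwards [hmem] with x hx
      exact (heq x (S_subset hx)).symm
    have hcont : ContinuousAt fe v := hfcont.continuousAt.congr heqv
    rw [hφdef, hint.fourierInv_fourier_eq hφint hcont]
    exact heq v (S_subset hv)
  -- Step 5: geometry
  have hα : 0 < ‖θ‖ := norm_pos_iff.2 hθ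
  set α : ℝ := ‖θ‖ with hαdef
  set u : E := ‖θ‖⁻¹ • θ with hudef
  have hu_norm : ‖u‖ = 1 := by
    rw [hudef, norm_smul, Real.norm_eq_abs, abs_of_pos (inv_pos.2 hα)]
    field_simp
    exact hαdef.symm
  set x₀ : E := (WithLp.toLp 2 (fun _ => (1/2 : ℝ)) : EuclideanSpace ℝ (Fin d)) with hx₀def
  have hx₀coord : ∀ i, x₀ i = 1/2 := fun i => rfl
  have hline : ∀ t ∈ Set.Icc (0:ℝ) (1/4), x₀ + t • u ∈ S d := by
    intro t ht i
    have hcoord : (x₀ + t • u) i = 1/2 + t * u i := by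
      have h0 : (x₀ + t • u) i = x₀ i + t * u i := rfl
      rw [h0, hx₀coord i]
    have h1 : |u i| ≤ 1 := by
      have := coord_le_norm u i
      rwa [hu_norm] at this
    have h2 : |t * u i| ≤ 1/4 := by
      rw [abs_mul]
      calc |t| * |u i| ≤ (1/4) * 1 := by
            apply mul_le_mul _ h1 (abs_nonneg _) (by norm_num)
            rw [abs_of_nonneg ht.1]; exact ht.2
        _ = 1/4 := by norm_num
    rw [hcoord]
    constructor
    · nlinarith [abs_le.1 h2]
    · nlinarith [abs_le.1 h2]
  have hθu : ⟪θ, u⟫_ℝ = α := by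
    rw [hudef, real_inner_smul_right, real_inner_self_eq_norm_sq, hαdef]
    field_simp
  -- Step 6: the analytic functions
  set G : ℂ → ℂ := fun z => ∫ w : E, φ w *
    Complex.exp (Complex.I * (((2 * Real.pi * ⟪w, x₀⟫_ℝ : ℝ) : ℂ)
      + z * ((2 * Real.pi * ⟪w, u⟫_ℝ : ℝ) : ℂ))) with hGdef
  have hGt : ∀ t : ℝ, G (t : ℂ) = 𝓕⁻ φ (x₀ + t • u) := by
    intro t
    rw [hGdef, Real.fourierInv_eq']
    refine integral_congr_ae (Filter.Eventually.of_forall fun v => ?_)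
    have hip : ⟪v, x₀ + t • u⟫_ℝ = ⟪v, x₀⟫_ℝ + t * ⟪v, u⟫_ℝ := by
      rw [inner_add_right, real_inner_smul_right]
    simp only [smul_eq_mul, hip]
    rw [show (Complex.I * (((2 * Real.pi * ⟪v, x₀⟫_ℝ : ℝ) : ℂ)
          + (t:ℂ) * ((2 * Real.pi * ⟪v, u⟫_ℝ : ℝ) : ℂ)))
        = ((2 * Real.pi * (⟪v, x₀⟫_ℝ + t * ⟪v, u⟫_ℝ) : ℝ) : ℂ) * Complex.I by
      push_cast; ring]
    ring
  set Cf : ℂ → ℂ := fun z =>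
      A * Complex.exp (Complex.I * ((⟪θ, x₀⟫_ℝ : ℂ) + z * (α : ℂ)))
      + B * Complex.exp (-(Complex.I * ((⟪θ, x₀⟫_ℝ : ℂ) + z * (α : ℂ)))) with hCfdef
  have hCft : ∀ t : ℝ, Cf (t : ℂ) = f (x₀ + t • u) := by
    intro t
    have hip : ⟪θ, x₀ + t • u⟫_ℝ = ⟪θ, x₀⟫_ℝ + t * α := by
      rw [inner_add_right, real_inner_smul_right, hθu]
    rw [hCfdef, hfdef]
    simp only [hip]
    push_cast
    try ring
  set St : Set ℂ := {z | |z.im| < c} with hStdef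
  have hSt_open : IsOpen St := by
    have h : St = Complex.im ⁻¹' Set.Ioo (-c) c := by
      ext z; simp [hStdef, abs_lt]
    rw [h]
    exact isOpen_Ioo.preimage Complex.continuous_im
  have hSt_conn : IsPreconnected St := by
    have h : St = Complex.imLm ⁻¹' Set.Ioo (-c) c := by
      ext z
      simp only [hStdef, Set.mem_setOf_eq, Set.mem_preimage, Set.mem_Ioo, abs_lt]
      rfl
    rw [h]
    exact ((convex_Ioo (-c) c).linear_preimage Complex.imLm).isPreconnected
  have hreal_mem : ∀ t : ℝ, (t : ℂ) ∈ St := by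
    intro t; simp [hStdef, hc]
  -- analyticity of G on the strip
  have hG_anal : AnalyticOnNhd ℂ G St := by
    apply DifferentiableOn.analyticOnNhd _ hSt_open
    intro z₀ hz₀
    apply DifferentiableAt.differentiableWithinAt
    have hz₀c : |z₀.im| < c := hz₀
    set a : E → ℝ := fun w => 2 * Real.pi * ⟪w, x₀⟫_ℝ with hadef
    set bb : E → ℝ := fun w => 2 * Real.pi * ⟪w, u⟫_ℝ with hbdef
    set ε : ℝ := (c - |z₀.im|)/2 with hεdef
    have hε : 0 < ε := by rw [hεdef]; linarith
    set m : ℝ := |z₀.im| + ε with hmdef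
    have hmc : m < c := by rw [hmdef, hεdef]; linarith
    have hm0 : 0 ≤ m := by
      rw [hmdef]; positivity
    have ha_cont : Continuous a := by
      apply continuous_const.mul
      exact continuous_inner.comp (continuous_id.prodMk continuous_const)
    have hb_cont : Continuous bb := by
      apply continuous_const.mul
      exact continuous_inner.comp (continuous_id.prodMk continuous_const)
    have hb_le : ∀ w : E, |bb w| ≤ 2 * Real.pi * ‖w‖ := by
      intro w
      rw [hbdef]
      simp only
      rw [abs_mul, abs_of_pos h2π]
      have : |⟪w, u⟫_ℝ| ≤ ‖w‖ := by
        calc |⟪w, u⟫_ℝ| ≤ ‖w‖ * ‖u‖ := abs_real_inner_le_norm _ _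
          _ = ‖w‖ := by rw [hu_norm, mul_one]
      exact mul_le_mul_of_nonneg_left this h2π.le
    have him : ∀ z ∈ Metric.ball z₀ ε, |z.im| ≤ m := by
      intro z hz
      have hd1 : |z.im - z₀.im| ≤ ‖z - z₀‖ := by
        simpa using Complex.abs_im_le_norm (z - z₀)
      have hd2 : ‖z - z₀‖ < ε := by
        rwa [Metric.mem_ball, Complex.dist_eq] at hz
      have : |z.im| - |z₀.im| ≤ |z.im - z₀.im| := abs_sub_abs_le_abs_sub _ _
      rw [hmdef]; linarith
    set Fi : ℂ → E → ℂ := fun z w =>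
      φ w * Complex.exp (Complex.I * ((a w : ℂ) + z * (bb w : ℂ))) with hFidef
    set Fi' : ℂ → E → ℂ := fun z w =>
      φ w * (Complex.exp (Complex.I * ((a w : ℂ) + z * (bb w : ℂ)))
        * (Complex.I * (bb w : ℂ))) with hFi'def
    have hnorm : ∀ (z : ℂ) (w : E),
        ‖φ w * Complex.exp (Complex.I * ((a w : ℂ) + z * (bb w : ℂ)))‖
        = ‖φ w‖ * Real.exp (-(z.im * bb w)) := by
      intro z w
      rw [norm_mul]
      congr 1
      rw [Complex.norm_exp]
      congr 1
      simp [Complex.mul_re, Complex.mul_im]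
      try ring
    have hexp_bound : ∀ z : ℂ, |z.im| ≤ m → ∀ w : E,
        Real.exp (-(z.im * bb w)) ≤ Real.exp (2 * Real.pi * m * ‖w‖) := by
      intro z hzm w
      apply Real.exp_le_exp.2
      have h1 : -(z.im * bb w) ≤ |z.im| * |bb w| := by
        rw [← abs_mul]
        exact neg_le_abs _
      have h2 : |z.im| * |bb w| ≤ m * (2 * Real.pi * ‖w‖) :=
        mul_le_mul hzm (hb_le w) (abs_nonneg _) hm0
      nlinarith
    have hcont_w : ∀ z : ℂ, Continuous (Fi z) := by
      intro z
      apply hφcont.mul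
      apply Complex.continuous_exp.comp
      apply continuous_const.mul
      exact (Complex.continuous_ofReal.comp ha_cont).add
        (continuous_const.mul (Complex.continuous_ofReal.comp hb_cont))
    have hcont_w' : Continuous (Fi' z₀) := by
      apply hφcont.mul
      apply Continuous.mul
      · apply Complex.continuous_exp.comp
        apply continuous_const.mul
        exact (Complex.continuous_ofReal.comp ha_cont).add
          (continuous_const.mul (Complex.continuous_ofReal.comp hb_cont))
      · exact continuous_const.mul (Complex.continuous_ofReal.comp hb_cont)
    set δ : ℝ := 2 * Real.pi * (c - m) with hδdef
    have hδpos : 0 < δ := by rw [hδdef]; nlinarith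
    set bound : E → ℝ :=
      fun w => (2 * Real.pi / δ) * (Real.exp (2 * Real.pi * c * ‖w‖) * ‖φ w‖) with hbounddef
    have hbound_int : Integrable bound := hA₀.const_mul _
    have key := hasDerivAt_integral_of_dominated_loc_of_deriv_le (F := Fi) (F' := Fi')
      (μ := volume) (x₀ := z₀) (bound := bound) (Metric.ball_mem_nhds z₀ hε)
      (Filter.Eventually.of_forall fun z => (hcont_w z).aestronglyMeasurable)
      ?int ?meas' ?bnd hbound_int ?diff
    case int =>
      refine hA₀.mono (hcont_w z₀).aestronglyMeasurable
        (Filter.Eventually.of_forall fun w => ?_)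
      rw [hnorm z₀ w]
      have h1 := hexp_bound z₀ (by rw [hmdef]; linarith [abs_nonneg z₀.im]) w
      have h2 : Real.exp (2 * Real.pi * m * ‖w‖) ≤ Real.exp (2 * Real.pi * c * ‖w‖) := by
        apply Real.exp_le_exp.2
        nlinarith [norm_nonneg w]
      have h3 : (0:ℝ) ≤ Real.exp (2 * Real.pi * c * ‖w‖) * ‖φ w‖ := by positivity
      rw [Real.norm_eq_abs, abs_of_nonneg h3]
      calc ‖φ w‖ * Real.exp (-(z₀.im * bb w))
          ≤ ‖φ w‖ * Real.exp (2 * Real.pi * c * ‖w‖) :=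
            mul_le_mul_of_nonneg_left (h1.trans h2) (norm_nonneg _)
        _ = Real.exp (2 * Real.pi * c * ‖w‖) * ‖φ w‖ := mul_comm _ _
    case meas' => exact hcont_w'.aestronglyMeasurable
    case bnd =>
      refine Filter.Eventually.of_forall fun w => fun z hz => ?_
      have hzm : |z.im| ≤ m := him z hz
      rw [hFi'def]
      simp only
      rw [show φ w * (Complex.exp (Complex.I * ((a w : ℂ) + z * (bb w : ℂ)))
            * (Complex.I * (bb w : ℂ)))
          = (φ w * Complex.exp (Complex.I * ((a w : ℂ) + z * (bb w : ℂ))))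
            * (Complex.I * (bb w : ℂ)) by ring]
      rw [norm_mul, hnorm z w]
      have hbnorm : ‖Complex.I * (bb w : ℂ)‖ = |bb w| := by
        rw [norm_mul, Complex.norm_I, one_mul, Complex.norm_real, Real.norm_eq_abs]
      rw [hbnorm]
      have h1 := hexp_bound z hzm w
      have h2 : |bb w| ≤ 2 * Real.pi * ‖w‖ := hb_le w
      have h3 : 2 * Real.pi * ‖w‖ ≤ (2 * Real.pi / δ) * Real.exp (δ * ‖w‖) := by
        have h4 : δ * ‖w‖ ≤ Real.exp (δ * ‖w‖) := by
          have := Real.add_one_le_exp (δ * ‖w‖)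
          nlinarith [mul_nonneg hδpos.le (norm_nonneg w)]
        rw [div_mul_eq_mul_div, le_div_iff₀ hδpos]
        nlinarith [Real.pi_pos, norm_nonneg w]
      have h5 : Real.exp (2 * Real.pi * m * ‖w‖) * Real.exp (δ * ‖w‖)
          = Real.exp (2 * Real.pi * c * ‖w‖) := by
        rw [← Real.exp_add]
        congr 1
        rw [hδdef]; ring
      rw [hbounddef]
      simp only
      have hφnn : (0:ℝ) ≤ ‖φ w‖ := norm_nonneg _
      have he1 : (0:ℝ) < Real.exp (-(z.im * bb w)) := Real.exp_pos _
      have he2 : (0:ℝ) < Real.exp (2 * Real.pi * m * ‖w‖) := Real.exp_pos _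
      have he3 : (0:ℝ) < Real.exp (δ * ‖w‖) := Real.exp_pos _
      calc ‖φ w‖ * Real.exp (-(z.im * bb w)) * |bb w|
          ≤ ‖φ w‖ * Real.exp (2 * Real.pi * m * ‖w‖) * ((2 * Real.pi / δ) * Real.exp (δ * ‖w‖)) := by
            apply mul_le_mul
            · exact mul_le_mul_of_nonneg_left h1 hφnn
            · exact h2.trans h3
            · exact abs_nonneg _
            · positivity
        _ = (2 * Real.pi / δ) * (Real.exp (2 * Real.pi * c * ‖w‖) * ‖φ w‖) := by
            rw [← h5]; ring
    case diff =>
      refine Filter.Eventually.of_forall fun w => fun z _hz => ?_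
      have h1 : HasDerivAt (fun z : ℂ => (a w : ℂ) + z * (bb w : ℂ)) ((bb w : ℂ)) z := by
        simpa using ((hasDerivAt_id z).mul_const ((bb w : ℂ))).const_add ((a w : ℂ))
      have h2 := h1.const_mul Complex.I
      have h3 := h2.cexp
      have h4 := h3.const_mul (φ w)
      simpa [hFidef, hFi'def, mul_comm, mul_assoc, mul_left_comm] using h4
    rw [hGdef]
    exact key.2.differentiableAt
  have hCf_anal : AnalyticOnNhd ℂ Cf St := by
    apply DifferentiableOn.analyticOnNhd _ hSt_open
    apply Differentiable.differentiableOn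
    apply Differentiable.add
    · exact (Complex.differentiable_exp.comp
        ((differentiable_const _).mul ((differentiable_const _).add
          (differentiable_id.mul (differentiable_const _))))).const_mul A
    · exact (Complex.differentiable_exp.comp
        (((differentiable_const _).mul ((differentiable_const _).add
          (differentiable_id.mul (differentiable_const _)))).neg)).const_mul B
  -- agreement
  have hagree : ∀ t : ℝ, t ∈ Set.Icc (0:ℝ) (1/4) → G (t:ℂ) = Cf (t:ℂ) := by
    intro t ht
    rw [hGt t, hCft t]
    exact hinv _ (hline t ht)
  have hEq : Set.EqOn G Cf St := by
    apply AnalyticOnNhd.eqOn_of_preconnected_of_frequently_eq hG_anal hCf_anal hSt_conn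
      (hreal_mem 0)
    have hseq : Tendsto (fun n : ℕ => (Complex.ofReal (((n:ℝ)+5)⁻¹)))
        atTop (nhdsWithin 0 {(0:ℂ)}ᶜ) := by
      apply tendsto_nhdsWithin_of_tendsto_nhds_of_eventually_within
      · have h0 : Tendsto (fun n : ℕ => ((n:ℝ)+5)⁻¹) atTop (nhds 0) := by
          apply Filter.Tendsto.inv_tendsto_atTop
          exact tendsto_atTop_add_const_right _ _ tendsto_natCast_atTop_atTop
        have h1 := (Complex.continuous_ofReal.tendsto (0:ℝ)).comp h0
        rw [← Complex.ofReal_zero]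
        exact h1
      · filter_upwards with n
        simp only [Set.mem_compl_iff, Set.mem_singleton_iff]
        intro h
        have h2 : ((n:ℝ)+5)⁻¹ = (0:ℝ) := by
          have := Complex.ofReal_eq_zero.1 h
          exact this
        have h5 : (0:ℝ) < (n:ℝ)+5 := by positivity
        rw [inv_eq_zero] at h2
        linarith
    have hfq : ∀ᶠ n : ℕ in atTop,
        G (Complex.ofReal (((n:ℝ)+5)⁻¹)) = Cf (Complex.ofReal (((n:ℝ)+5)⁻¹)) := by
      filter_upwards with n
      refine hagree ((n:ℝ)+5)⁻¹ ⟨by positivity, ?_⟩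
      rw [inv_le_comm₀ (by positivity) (by norm_num)]
      have : (0:ℝ) ≤ (n:ℝ) := Nat.cast_nonneg n
      linarith
    exact hseq.frequently hfq.frequently
  -- Step 7: contradiction via Riemann-Lebesgue
  have hAll : ∀ t : ℝ, 𝓕⁻ φ (x₀ + t • u) = Cf (t : ℂ) := by
    intro t
    rw [← hGt t]
    exact hEq (hreal_mem t)
  have hα0 : (α:ℂ) ≠ 0 := by
    simp only [ne_eq, Complex.ofReal_eq_zero]
    exact hα.ne'
  -- nonvanishing point
  have hnz : ∃ t₁ : ℝ, Cf (t₁ : ℂ) ≠ 0 := by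
    by_contra h
    push_neg at h
    have h0 := h 0
    have h1 := h (Real.pi / (2*α))
    set γ : ℂ := (⟪θ, x₀⟫_ℝ : ℂ) with hγdef
    set e₁ : ℂ := Complex.exp (Complex.I * γ) with he₁def
    set e₂ : ℂ := Complex.exp (-(Complex.I * γ)) with he₂def
    have he₁ : e₁ ≠ 0 := Complex.exp_ne_zero _
    have he₂ : e₂ ≠ 0 := Complex.exp_ne_zero _
    have h0' : A * e₁ + B * e₂ = 0 := by
      rw [hCfdef] at h0
      simpa [he₁def, he₂def, hγdef] using h0
    have hzα : ((Real.pi / (2*α) : ℝ) : ℂ) * (α : ℂ) = ((Real.pi/2 : ℝ) : ℂ) := by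
      push_cast
      field_simp
    have hhalf : Complex.exp (Complex.I * ((Real.pi/2 : ℝ) : ℂ)) = Complex.I := by
      rw [mul_comm, Complex.exp_mul_I]
      rw [← Complex.ofReal_cos, ← Complex.ofReal_sin, Real.cos_pi_div_two, Real.sin_pi_div_two]
      simp
    have hhalf' : Complex.exp (-(Complex.I * ((Real.pi/2 : ℝ) : ℂ))) = -Complex.I := by
      rw [Complex.exp_neg, hhalf, Complex.inv_I]
    have h1' : A * e₁ * Complex.I + B * e₂ * (-Complex.I) = 0 := by
      rw [hCfdef] at h1
      simp only [hzα] at h1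
      rw [show Complex.I * (γ + ((Real.pi/2 : ℝ) : ℂ))
          = Complex.I * γ + Complex.I * ((Real.pi/2 : ℝ) : ℂ) by ring] at h1
      rw [Complex.exp_add] at h1
      rw [show -(Complex.I * γ + Complex.I * ((Real.pi/2 : ℝ) : ℂ))
          = -(Complex.I * γ) + -(Complex.I * ((Real.pi/2 : ℝ) : ℂ)) by ring] at h1
      rw [Complex.exp_add] at h1
      rw [hhalf, hhalf'] at h1
      rw [← he₁def, ← he₂def] at h1
      linear_combination h1
    have h2' : A * e₁ - B * e₂ = 0 := by
      have h3 : Complex.I * (A * e₁ - B * e₂) = 0 := by linear_combination h1'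
      rcases mul_eq_zero.1 h3 with h4 | h4
      · exact absurd h4 Complex.I_ne_zero
      · exact h4
    have hAe : A * e₁ = 0 := by
      have h5 : A * e₁ = ((A * e₁ + B * e₂) + (A * e₁ - B * e₂))/2 := by ring
      rw [h0', h2'] at h5
      simpa using h5
    have hBe : B * e₂ = 0 := by
      have h5 : B * e₂ = ((A * e₁ + B * e₂) - (A * e₁ - B * e₂))/2 := by ring
      rw [h0', h2'] at h5
      simpa using h5
    exact hAB ⟨by simpa [he₁] using mul_eq_zero.1 hAe,
      by simpa [he₂] using mul_eq_zero.1 hBe⟩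
  obtain ⟨t₁, ht₁⟩ := hnz
  -- periodicity
  have hper : ∀ k : ℕ, Cf ((t₁ + k * (2*Real.pi/α) : ℝ) : ℂ) = Cf (t₁ : ℂ) := by
    intro k
    have hexp1 : Complex.exp ((k:ℂ) * (2*(Real.pi:ℂ)*Complex.I)) = 1 := by
      simpa using Complex.exp_int_mul_two_pi_mul_I (k:ℤ)
    have hexp2 : Complex.exp (-((k:ℂ) * (2*(Real.pi:ℂ)*Complex.I))) = 1 := by
      rw [Complex.exp_neg, hexp1, inv_one]
    have harg : Complex.I * ((⟪θ, x₀⟫_ℝ : ℂ) + ((t₁ + k * (2*Real.pi/α) : ℝ) : ℂ) * (α : ℂ))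
        = Complex.I * ((⟪θ, x₀⟫_ℝ : ℂ) + (t₁ : ℂ) * (α : ℂ))
          + (k:ℂ) * (2*(Real.pi:ℂ)*Complex.I) := by
      have hαne : (α:ℂ) ≠ 0 := hα0
      push_cast
      field_simp
      ring
    rw [hCfdef]
    simp only [harg]
    rw [Complex.exp_add, hexp1, mul_one]
    rw [neg_add, Complex.exp_add, hexp2, mul_one]
  -- Riemann-Lebesgue
  have hRL : Tendsto (𝓕 φ) (cocompact (EuclideanSpace ℝ (Fin d))) (nhds 0) := by
    have h := tendsto_integral_exp_inner_smul_cocompact φ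
    exact h
  set s : ℕ → ℝ := fun k => t₁ + k * (2*Real.pi/α) with hsdef
  have hs_atTop : Tendsto s atTop atTop := by
    apply tendsto_atTop_add_const_left
    apply Tendsto.atTop_mul_const (by positivity : (0:ℝ) < 2*Real.pi/α)
    exact tendsto_natCast_atTop_atTop
  have hnorm_atTop : Tendsto (fun k : ℕ => ‖-(x₀ + s k • u)‖) atTop atTop := by
    apply tendsto_atTop_mono' _ _ (tendsto_atTop_add_const_right _ (-‖x₀‖) hs_atTop)
    filter_upwards [hs_atTop.eventually_ge_atTop 0] with k hk
    have h1 : ‖s k • u‖ = s k := by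
      rw [norm_smul, hu_norm, mul_one, Real.norm_eq_abs, abs_of_nonneg hk]
    have h2 : ‖s k • u‖ ≤ ‖x₀ + s k • u‖ + ‖x₀‖ := by
      have h3 := norm_sub_le (x₀ + s k • u) x₀
      simpa using h3
    rw [norm_neg]
    linarith [h2, h1.ge, h1.le]
  have htend : Tendsto (fun k : ℕ => -(x₀ + s k • u)) atTop
      (cocompact (EuclideanSpace ℝ (Fin d))) := by
    rw [← Metric.cobounded_eq_cocompact, ← comap_norm_atTop, tendsto_comap_iff]
    exact hnorm_atTop
  have hlim : Tendsto (fun k : ℕ => 𝓕⁻ φ (x₀ + s k • u)) atTop (nhds 0) := by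
    have heq2 : (fun k : ℕ => 𝓕⁻ φ (x₀ + s k • u))
        = fun k : ℕ => 𝓕 φ (-(x₀ + s k • u)) := by
      funext k
      exact Real.fourierInv_eq_fourier_neg φ _
    rw [heq2]
    exact hRL.comp htend
  have hconst : (fun k : ℕ => 𝓕⁻ φ (x₀ + s k • u)) = fun _ : ℕ => Cf (t₁ : ℂ) := by
    funext k
    rw [hAll (s k), hsdef]
    exact hper k
  rw [hconst] at hlim
  exact ht₁ (tendsto_nhds_unique tendsto_const_nhds hlim)

lemma reduce_weight {β c : ℝ} (hβ : 1 ≤ β) (hc : 0 < c) (g : EuclideanSpace ℝ (Fin d) → ℂ)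
    (h : (∫⁻ ξ, ENNReal.ofReal (Real.exp (c * ‖ξ‖ ^ β) * ‖fourierT g ξ‖)) ≠ ⊤) :
    (∫⁻ ξ, ENNReal.ofReal (Real.exp (c * ‖ξ‖) * ‖fourierT g ξ‖)) ≠ ⊤ := by
  have hpt : ∀ ξ : EuclideanSpace ℝ (Fin d),
      ENNReal.ofReal (Real.exp (c * ‖ξ‖) * ‖fourierT g ξ‖)
      ≤ ENNReal.ofReal (Real.exp c)
        * ENNReal.ofReal (Real.exp (c * ‖ξ‖ ^ β) * ‖fourierT g ξ‖) := by
    intro ξ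
    rw [← ENNReal.ofReal_mul (Real.exp_nonneg _)]
    apply ENNReal.ofReal_le_ofReal
    rw [← mul_assoc, ← Real.exp_add]
    have h1 : ‖ξ‖ ≤ 1 + ‖ξ‖ ^ β := by
      rcases le_total ‖ξ‖ 1 with h2 | h2
      · have := Real.rpow_nonneg (norm_nonneg ξ) β
        linarith
      · have h3 : ‖ξ‖ ^ (1:ℝ) ≤ ‖ξ‖ ^ β := Real.rpow_le_rpow_of_exponent_le h2 hβ
        rw [Real.rpow_one] at h3
        linarith
    have h4 : c * ‖ξ‖ ≤ c + c * ‖ξ‖ ^ β := by nlinarith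
    exact mul_le_mul_of_nonneg_right (Real.exp_le_exp.2 h4) (norm_nonneg _)
  intro htop
  have hle := MeasureTheory.lintegral_mono (μ := volume) hpt
  rw [htop, MeasureTheory.lintegral_const_mul' _ _ ENNReal.ofReal_ne_top] at hle
  have hlt : ENNReal.ofReal (Real.exp c)
      * (∫⁻ ξ, ENNReal.ofReal (Real.exp (c * ‖ξ‖ ^ β) * ‖fourierT g ξ‖)) < ⊤ :=
    ENNReal.mul_lt_top ENNReal.ofReal_lt_top (lt_top_iff_ne_top.2 h)
  exact lt_irrefl ⊤ (hle.trans_lt hlt)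

lemma cos_decomp (M b r : ℝ) : ((M * Real.cos (r + b) : ℝ) : ℂ)
    = (((M/2 : ℝ) : ℂ) * Complex.exp (Complex.I * (b:ℂ))) * Complex.exp (Complex.I * (r:ℂ))
      + (((M/2 : ℝ) : ℂ) * Complex.exp (-(Complex.I * (b:ℂ))))
        * Complex.exp (-(Complex.I * (r:ℂ))) := by
  rw [Complex.ofReal_mul, Complex.ofReal_cos]
  have hcos : Complex.cos ((r:ℂ) + (b:ℂ))
      = (Complex.exp (((r:ℂ) + (b:ℂ)) * Complex.I)
        + Complex.exp (-((r:ℂ) + (b:ℂ)) * Complex.I)) / 2 := rfl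
  rw [Complex.ofReal_add, hcos]
  rw [show ((r:ℂ) + (b:ℂ)) * Complex.I = Complex.I * (r:ℂ) + Complex.I * (b:ℂ) by ring]
  rw [show -((r:ℂ) + (b:ℂ)) * Complex.I
      = -(Complex.I * (r:ℂ)) + -(Complex.I * (b:ℂ)) by ring]
  rw [Complex.exp_add, Complex.exp_add]
  push_cast
  ring

end Stmt8Aux



/-- For β ≥ 1 a nontrivial cosine has infinite exponential spectral Barron norm
on the unit cube; in particular the cosine-network classes are not contained in B^{β,c}. -/
theorem stmt8 (d : ℕ) (hd : 0 < d) (β c : ℝ) (hβ : 1 ≤ β) (hc : 0 < c)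
    (θ : EuclideanSpace ℝ (Fin d)) (hθ : θ ≠ 0) (b M : ℝ) (hM : M ≠ 0) :
    expBarronNorm β c (unitCube d) (fun x => M * Real.cos (⟪θ, x⟫_ℝ + b)) = ⊤ ∧
    (¬ ∃ g : EuclideanSpace ℝ (Fin d) → ℝ, Integrable g ∧
      (∀ x ∈ unitCube d, g x = M * Real.cos (⟪θ, x⟫_ℝ + b)) ∧
      (∫⁻ ξ, ENNReal.ofReal
        (Real.exp (c * ‖ξ‖ ^ β) * ‖fourierT (fun x => (g x : ℂ)) ξ‖)) ≠ ⊤) ∧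
    (∀ (N : ℕ) (M' : ℝ), 1 ≤ N → 0 < M' →
      ¬ (cosineClass d N M' ⊆ {g | expBarronNormC β c (unitCube d) g ≠ ⊤})) := by
  classical
  have main : ¬ ∃ g : EuclideanSpace ℝ (Fin d) → ℝ, Integrable g ∧
      (∀ x ∈ unitCube d, g x = M * Real.cos (⟪θ, x⟫_ℝ + b)) ∧
      (∫⁻ ξ, ENNReal.ofReal
        (Real.exp (c * ‖ξ‖ ^ β) * ‖fourierT (fun x => (g x : ℂ)) ξ‖)) ≠ ⊤ := by
    rintro ⟨g, hg, hgeq, hgfin⟩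
    have hgC : MeasureTheory.Integrable (fun x => ((g x : ℝ) : ℂ)) :=
      Complex.ofRealCLM.integrable_comp hg
    refine Stmt8Aux.key c hc θ hθ (((M/2 : ℝ) : ℂ) * Complex.exp (Complex.I * (b:ℂ)))
      (((M/2 : ℝ) : ℂ) * Complex.exp (-(Complex.I * (b:ℂ)))) ?_ (fun x => ((g x : ℝ) : ℂ))
      hgC ?_ (Stmt8Aux.reduce_weight hβ hc _ hgfin)
    · rintro ⟨h1, -⟩
      rcases mul_eq_zero.1 h1 with h2 | h2
      · have h3 : (M/2 : ℝ) = 0 := by exact_mod_cast h2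
        rw [div_eq_zero_iff] at h3
        rcases h3 with h3 | h3
        · exact hM h3
        · norm_num at h3
      · exact Complex.exp_ne_zero _ h2
    · intro x hx
      show ((g x : ℝ) : ℂ) = _
      rw [hgeq x hx]
      exact Stmt8Aux.cos_decomp M b _
  refine ⟨?_, main, ?_⟩
  · apply sInf_eq_top.2
    rintro y ⟨fe, hfe, hEqOn, rfl⟩
    by_contra hne
    exact main ⟨fe, hfe, fun x hx => hEqOn hx, hne⟩
  · intro N M' hN hM' hsub
    set θ0 : EuclideanSpace ℝ (Fin d) := EuclideanSpace.single ⟨0, hd⟩ (1:ℝ) with hθ0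
    have hθ0ne : θ0 ≠ 0 := by
      intro h
      have h2 := congrArg (fun v : EuclideanSpace ℝ (Fin d) => v ⟨0, hd⟩) h
      simp [hθ0, EuclideanSpace.single_apply] at h2
    set g : EuclideanSpace ℝ (Fin d) → ℂ :=
      fun x => (M' : ℂ) * Complex.exp (Complex.I * ((2 * Real.pi * ⟪θ0, x⟫_ℝ : ℝ) : ℂ))
      with hgdef
    have hmem : g ∈ cosineClass d N M' := by
      refine ⟨fun n => if n = (⟨0, Nat.lt_of_lt_of_le Nat.zero_lt_one hN⟩ : Fin N)
        then (M' : ℂ) else 0, fun _ => θ0, ?_, ?_⟩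
      · have hsum : (∑ n : Fin N,
            ‖if n = (⟨0, Nat.lt_of_lt_of_le Nat.zero_lt_one hN⟩ : Fin N)
              then (M' : ℂ) else 0‖) = M' := by
          simp [apply_ite (fun z : ℂ => ‖z‖), Finset.sum_ite_eq', Complex.norm_real,
            Real.norm_eq_abs, abs_of_pos hM']
        exact le_of_eq hsum
      · funext x
        rw [hgdef]
        simp only [ite_mul, zero_mul, Finset.sum_ite_eq', Finset.mem_univ, if_true]
    have htop : expBarronNormC β c (unitCube d) g = ⊤ := by
      apply sInf_eq_top.2
      rintro y ⟨fe, hfe, hEqOn, rfl⟩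
      by_contra hne
      refine Stmt8Aux.key c hc ((2 * Real.pi) • θ0) ?_ ((M' : ℝ) : ℂ) 0 ?_ fe hfe ?_
        (Stmt8Aux.reduce_weight hβ hc _ hne)
      · exact smul_ne_zero (by positivity) hθ0ne
      · rintro ⟨h1, -⟩
        have h2 : M' = 0 := by exact_mod_cast h1
        exact hM'.ne' h2
      · intro x hx
        rw [hEqOn hx]
        show (M' : ℂ) * Complex.exp (Complex.I * ((2 * Real.pi * ⟪θ0, x⟫_ℝ : ℝ) : ℂ)) = _
        rw [real_inner_smul_left, zero_mul, add_zero]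
    exact (hsub hmem) htop


end
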